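/- Let C be a monoidal category with coequalizers preserved by tensoring on both sides and let A be an algebra in C. The forgetful functor U : _A C_A → C, together with the structure morphisms U_{M,N} := π_{M,N} : U(M)⊗U(N) = M⊗N → M⊗_A N = U(M⊗_A N) and U_0 := u_A : 𝟙 → A = U(A), is a lax monoidal functor; i.e. these data satisfy the associativity constraint U_{M,N⊗_A P} ∘ (id_{U(M)}⊗U_{N,P}) ∘ α_{U(M),U(N),U(P)} = U(α^A_{M,N,P}) ∘ U_{M⊗_A N,P} ∘ (U_{M,N}⊗id_{U(P)}) and the unitality constraints U(l^A_M)^{-1} ∘ l_{U(M)} = U_{A,M} ∘ (U_0⊗id_{U(M)}) and U(r^A_M)^{-1} ∘ r_{U(M)} = U_{M,A} ∘ (id_{U(M)}⊗U_0). -/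

import Mathlib

/-!
The associator and unitors of `_A C_A` are induced from those of `C` by descending along the
canonical projections: `α^A` through `π_{M⊗_A N,P} ∘ (π_{M,N} ⊗ id)`, which is an epimorphism
because `- ⊗ P` preserves the coequalizer defining `M ⊗_A N`, and `(l^A_M)⁻¹` as
`π_{A,M} ∘ (u_A ⊗ id) ∘ λ⁻¹`. So each coherence condition of `U` is the defining equation of the
corresponding structure morphism of `_A C_A`.
-/

open CategoryTheory MonoidalCategory CategoryTheory.Limits

namespace Stmt17

variable {C : Type*} [Category C] [MonoidalCategory C]
variable [HasCoequalizers C]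
variable [∀ X : C, PreservesColimitsOfSize.{0, 0} (tensorLeft X)]
variable [∀ X : C, PreservesColimitsOfSize.{0, 0} (tensorRight X)]

/-- The canonical projection `π_{M,N} : U(M) ⊗ U(N) = M.X ⊗ N.X ⟶ U(M ⊗_A N)`, which is the
structure morphism `U_{M,N}` of the forgetful functor `U : _A C_A ⥤ C`. -/
noncomputable def piB {A B D : Mon C} (M : Bimod A B) (N : Bimod B D) :
    M.X ⊗ N.X ⟶ Bimod.TensorBimod.X M N :=
  coequalizer.π _ _

section

variable {W X Y Z : Mon C}

theorem piB_whiskerRight_piB_associatorBimod_hom (L : Bimod W X) (M : Bimod X Y)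
    (N : Bimod Y Z) :
    (piB L M ▷ N.X) ≫ piB (L.tensorBimod M) N ≫ (Bimod.associatorBimod L M N).hom.hom =
      (α_ L.X M.X N.X).hom ≫ (L.X ◁ piB M N) ≫ piB L (M.tensorBimod N) := by
  dsimp only [piB, Bimod.associatorBimod, Bimod.isoOfIso, Bimod.AssociatorBimod.hom]
  erw [coequalizer.π_desc]
  exact π_tensor_id_preserves_coequalizer_inv_desc ..

theorem leftUnitorBimod_inv_hom (M : Bimod X Y) :
    (Bimod.leftUnitorBimod M).inv.hom =
      (λ_ M.X).inv ≫ (X.mon.one ▷ M.X) ≫ piB (Bimod.regular X) M :=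
  rfl

theorem rightUnitorBimod_inv_hom (M : Bimod X Y) :
    (Bimod.rightUnitorBimod M).inv.hom =
      (ρ_ M.X).inv ≫ (M.X ◁ Y.mon.one) ≫ piB M (Bimod.regular Y) :=
  rfl

end

/-- **Statement 17.** Let `C` be a monoidal category with coequalizers preserved by tensoring
on both sides and `A` an algebra in `C`.  The forgetful functor `U : _A C_A ⥤ C`, with
`U_{M,N} := π_{M,N}` and `U₀ := u_A`, is a lax monoidal functor: the associativity constraint
`U_{M,N⊗_A P} ∘ (id ⊗ U_{N,P}) ∘ α = U(α^A_{M,N,P}) ∘ U_{M⊗_A N,P} ∘ (U_{M,N} ⊗ id)` and the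
unitality constraints `U(l^A_M)⁻¹ ∘ l_{U(M)} = U_{A,M} ∘ (U₀ ⊗ id)` and
`U(r^A_M)⁻¹ ∘ r_{U(M)} = U_{M,A} ∘ (id ⊗ U₀)` hold. -/
theorem forgetful_functor_lax_monoidal
    (A : Mon C) (M N P : Bimod A A) :
    -- associativity constraint
    ((α_ M.X N.X P.X).hom ≫ (M.X ◁ piB N P) ≫ piB M (N.tensorBimod P) =
      (piB M N ▷ P.X) ≫ piB (M.tensorBimod N) P ≫
        (Bimod.associatorBimod M N P).hom.hom) ∧
    -- left unitality constraint
    ((λ_ M.X).hom ≫ (Bimod.leftUnitorBimod M).inv.hom =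
      (A.mon.one ▷ M.X) ≫ piB (Bimod.regular A) M) ∧
    -- right unitality constraint
    ((ρ_ M.X).hom ≫ (Bimod.rightUnitorBimod M).inv.hom =
      (M.X ◁ A.mon.one) ≫ piB M (Bimod.regular A)) := by
  refine ⟨(piB_whiskerRight_piB_associatorBimod_hom M N P).symm, ?_, ?_⟩
  · rw [leftUnitorBimod_inv_hom]
    exact Iso.hom_inv_id_assoc _ _
  · rw [rightUnitorBimod_inv_hom]
    exact Iso.hom_inv_id_assoc _ _

end Stmt17
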